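/- arXiv:1705.10905 — 2 statements merged into one kernel-verified Lean document; each statement's English description precedes it below -/
import Mathlib

section
/- Let T be an abelian group, S a subgroup of T of finite index, and n a positive integer with gcd(n,[T:S])=1. Then the natural map S/nS -> T/nT induced by inclusion is an isomorphism. -/
/-!
Write `m = [T : S]`, so that `m • T ⊆ S`. From a Bézout relation `a n + b m = 1` every `t : T`
splits as `t = n • (a • t) + b • (m • t)` with the second summand in `S`. Read modulo `nT`, this
shows that `S → T/nT` is surjective; applied to a `t` with `n • t ∈ S`, it shows `t ∈ S`, so an
element of `S` lying in `nT` already lies in `nS`.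
-/

theorem Nat.Coprime.exists_forall_zsmul_nsmul_add_zsmul_nsmul_eq {G : Type*} [AddCommGroup G]
    {m n : ℕ} (h : m.Coprime n) : ∃ a b : ℤ, ∀ g : G, a • m • g + b • n • g = g := by
  obtain ⟨a, b, hab⟩ := Nat.isCoprime_iff_coprime.mpr h
  refine ⟨a, b, fun g => ?_⟩
  rw [← natCast_zsmul, ← natCast_zsmul, smul_smul, smul_smul, ← add_smul, hab, one_smul]

namespace AddSubgroup

variable {T : Type*} [AddCommGroup T] {S : AddSubgroup T} {n : ℕ}

theorem mem_of_nsmul_mem_of_coprime_index (h : n.Coprime S.index) {t : T} (ht : n • t ∈ S) :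
    t ∈ S := by
  obtain ⟨a, b, hab⟩ := h.exists_forall_zsmul_nsmul_add_zsmul_nsmul_eq (G := T)
  rw [← hab t]
  exact add_mem (zsmul_mem ht a) (zsmul_mem (S.nsmul_index_mem t) b)

theorem exists_mem_add_nsmul_eq_of_coprime_index (h : n.Coprime S.index) (t : T) :
    ∃ s ∈ S, ∃ u : T, s + n • u = t := by
  obtain ⟨a, b, hab⟩ := h.exists_forall_zsmul_nsmul_add_zsmul_nsmul_eq (G := T)
  refine ⟨b • S.index • t, zsmul_mem (S.nsmul_index_mem t) b, a • t, ?_⟩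
  rw [smul_comm n a t, add_comm, hab]

end AddSubgroup

theorem stmt_1_general (T : Type*) [AddCommGroup T] (S : AddSubgroup T) (n : ℕ)
    (hcop : Nat.gcd n S.index = 1) :
    Function.Surjective
        ((QuotientAddGroup.mk' (n • (AddMonoidHom.id T)).range).comp S.subtype) ∧
      ((QuotientAddGroup.mk' (n • (AddMonoidHom.id T)).range).comp S.subtype).ker =
        (n • (AddMonoidHom.id ↥S)).range := by
  refine ⟨fun q => ?_, ?_⟩
  · obtain ⟨t, rfl⟩ := QuotientAddGroup.mk'_surjective _ q
    obtain ⟨s, hs, u, rfl⟩ := AddSubgroup.exists_mem_add_nsmul_eq_of_coprime_index hcop t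
    exact ⟨⟨s, hs⟩, QuotientAddGroup.eq.mpr ⟨u, by simp⟩⟩
  · ext s
    simp only [AddMonoidHom.mem_ker, AddMonoidHom.comp_apply, AddSubgroup.coe_subtype,
      QuotientAddGroup.mk'_apply, QuotientAddGroup.eq_zero_iff, AddMonoidHom.mem_range,
      AddMonoidHom.smul_apply, AddMonoidHom.id_apply]
    constructor
    · rintro ⟨t, ht⟩
      have htS : t ∈ S := AddSubgroup.mem_of_nsmul_mem_of_coprime_index hcop (ht ▸ s.2)
      exact ⟨⟨t, htS⟩, Subtype.ext ht⟩
    · rintro ⟨u, rfl⟩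
      exact ⟨u, rfl⟩

/-- If `S ≤ T` has finite index coprime to `n`, then the natural map `S/nS → T/nT`
is an isomorphism (i.e. the composition `S → T → T/nT` is surjective with kernel `nS`). -/
theorem stmt_1 (T : Type*) [AddCommGroup T] (S : AddSubgroup T) (n : ℕ) (hn : 0 < n)
    (hfin : S.index ≠ 0) (hcop : Nat.gcd n S.index = 1) :
    Function.Surjective
        ((QuotientAddGroup.mk' (n • (AddMonoidHom.id T)).range).comp S.subtype) ∧
      ((QuotientAddGroup.mk' (n • (AddMonoidHom.id T)).range).comp S.subtype).ker =
        (n • (AddMonoidHom.id ↥S)).range :=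
  stmt_1_general T S n hcop
end

section
/- Let G be a cyclic group of order p^k generated by σ, where p is prime and n is a power of p with n | p^{k-1}. Set N_n = Σ_{i=1}^{p^k/n} σ^{in} and R = Z[G]/N_n Z[G]. For any positive integer d with n' | n where n' is a power of p dividing p^{k-1}, the element 1 - σ^{n'} is a nonzerodivisor in R. -/
/-!
Evaluating at `σ` identifies `ℤ[G]` with `ℤ[X]/(X^M - 1)`, `M = p^k`, and `N_n` is the image of
the monic polynomial `P = (X^M - 1)/(X^n - 1) = ∑_{i < M/n} X^{in}`, so `R ≅ ℤ[X]/(P)`. Since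
`X^M - 1` is separable over `ℚ`, `P` is coprime to `X^n - 1` and hence to its divisor
`X^{n'} - 1`; thus `P ∣ (X^{n'} - 1) f` forces `P ∣ f` in `ℚ[X]`, and then in `ℤ[X]` because `P`
is monic.
-/

open Polynomial

theorem Polynomial.dvd_of_dvd_mul_of_mul_eq_X_pow_sub_one {M : ℕ} (hM : M ≠ 0)
    {P Q D f : ℤ[X]} (hP : P.Monic) (hPQ : P * Q = X ^ M - 1) (hDQ : D ∣ Q)
    (h : P ∣ D * f) : P ∣ f := by
  set ι := Int.castRingHom ℚ
  have hsep : (P.map ι * Q.map ι).Separable := by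
    rw [← Polynomial.map_mul, hPQ]
    simpa using separable_X_pow_sub_C (1 : ℚ) (by exact_mod_cast hM) one_ne_zero
  have hcop : IsCoprime (P.map ι) (D.map ι) :=
    hsep.isCoprime.of_isCoprime_of_dvd_right (Polynomial.map_dvd ι hDQ)
  refine (map_dvd_map ι Int.cast_injective hP).1 (hcop.dvd_of_dvd_mul_left ?_)
  simpa [Polynomial.map_mul] using Polynomial.map_dvd ι h

theorem Ideal.Quotient.isLeftRegular_mk_map_of_surjective {A B F : Type*} [CommRing A]
    [CommRing B] [FunLike F A B] [RingHomClass F A B] {φ : F} (hφ : Function.Surjective φ)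
    {P D : A}
    (hker : ∀ a, φ a = 0 → P ∣ a) (hD : ∀ a, P ∣ D * a → P ∣ a) :
    IsLeftRegular (Ideal.Quotient.mk (Ideal.span {φ P}) (φ D)) := by
  refine isLeftRegular_of_non_zero_divisor _ fun r hr => ?_
  obtain ⟨a, rfl⟩ := (Ideal.Quotient.mk_surjective.comp hφ) r
  rw [Function.comp_apply, ← map_mul, ← map_mul, Ideal.Quotient.eq_zero_iff_mem,
    Ideal.mem_span_singleton] at hr
  obtain ⟨b', hb'⟩ := hr
  obtain ⟨b, rfl⟩ := hφ b'
  have hPDa : P ∣ D * a - P * b := hker _ (by rw [map_sub, hb', map_mul, sub_self])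
  obtain ⟨c, hc⟩ := hD a (by simpa using dvd_add hPDa (dvd_mul_right P b))
  rw [Function.comp_apply, hc, map_mul, Ideal.Quotient.eq_zero_iff_mem]
  exact Ideal.mul_mem_right _ _ (Ideal.subset_span rfl)

theorem Finset.sum_Icc_one_eq_sum_range {β : Type*} [AddCommMonoid β] {f : ℕ → β} {m : ℕ}
    (hf : f m = f 0) : ∑ i ∈ Icc 1 m, f i = ∑ i ∈ range m, f i := by
  have hshift : ∑ i ∈ Icc 1 m, f i = ∑ i ∈ range m, f (i + 1) := by
    rw [range_eq_Ico, sum_Ico_add']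
    rfl
  rcases m with _ | k
  · simp
  · rw [hshift, sum_range_succ, sum_range_succ' f, hf, add_comm]

theorem ofAdd_one_pow_natCast {M : ℕ} (j : ℕ) :
    Multiplicative.ofAdd (1 : ZMod M) ^ j = Multiplicative.ofAdd (j : ZMod M) := by
  rw [← ofAdd_nsmul, nsmul_one]

def ZMod.powMonoidHom {M : ℕ} [NeZero M] {A : Type*} [Monoid A] (u : A) (hu : u ^ M = 1) :
    Multiplicative (ZMod M) →* A where
  toFun g := u ^ (Multiplicative.toAdd g).val
  map_one' := by simp
  map_mul' x y := by
    rw [toAdd_mul, ZMod.val_add, ← pow_add, ← pow_mod_orderOf, ← pow_mod_orderOf (n := _ + _),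
      Nat.mod_mod_of_dvd _ (orderOf_dvd_of_pow_eq_one hu)]

theorem ZMod.powMonoidHom_ofAdd_one {M : ℕ} [NeZero M] {A : Type*} [Monoid A] (u : A)
    (hu : u ^ M = 1) :
    ZMod.powMonoidHom u hu (Multiplicative.ofAdd 1) = u := by
  show u ^ (1 : ZMod M).val = u
  rw [ZMod.val_one_eq_one_mod, ← pow_mod_orderOf,
    Nat.mod_mod_of_dvd _ (orderOf_dvd_of_pow_eq_one hu), pow_mod_orderOf, pow_one]

section CyclicGroupAlgebra

variable (R : Type*) [CommRing R] (M : ℕ) [NeZero M]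

noncomputable abbrev cyclicGen : MonoidAlgebra R (Multiplicative (ZMod M)) :=
  MonoidAlgebra.of R _ (Multiplicative.ofAdd 1)

omit [NeZero M] in
theorem aeval_cyclicGen_X_pow (j : ℕ) :
    aeval (cyclicGen R M) (X ^ j : R[X]) = MonoidAlgebra.of R _ (Multiplicative.ofAdd 1 ^ j) := by
  rw [map_pow, aeval_X, map_pow]

theorem aeval_cyclicGen_surjective :
    Function.Surjective (aeval (R := R) (cyclicGen R M)) := by
  intro (x : MonoidAlgebra R _)
  induction x using MonoidAlgebra.induction_on with
  | of g =>
    refine ⟨X ^ (Multiplicative.toAdd g).val, ?_⟩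
    rw [aeval_cyclicGen_X_pow, ofAdd_one_pow_natCast, ZMod.natCast_zmod_val, ofAdd_toAdd]
  | add x y hx hy =>
    obtain ⟨f, rfl⟩ := hx
    obtain ⟨g, rfl⟩ := hy
    exact ⟨f + g, map_add _ f g⟩
  | smul r x hx =>
    obtain ⟨f, rfl⟩ := hx
    exact ⟨r • f, map_smul _ r f⟩

variable {R M} in
theorem X_pow_sub_one_dvd_of_aeval_cyclicGen_eq_zero {f : R[X]}
    (hf : aeval (cyclicGen R M) f = 0) : X ^ M - 1 ∣ f := by
  have hroot : AdjoinRoot.root (X ^ M - 1 : R[X]) ^ M = 1 := by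
    have := AdjoinRoot.aeval_eq (f := (X ^ M - 1 : R[X])) (X ^ M - 1)
    rw [AdjoinRoot.mk_self] at this
    simpa [sub_eq_zero] using this
  -- `ψ ∘ aeval σ` is the quotient map `R[X] → R[X] / (X^M - 1)`.
  let ψ := MonoidAlgebra.lift R _ _ (ZMod.powMonoidHom _ hroot)
  have hψ : ψ (cyclicGen R M) = AdjoinRoot.root (X ^ M - 1 : R[X]) := by
    rw [MonoidAlgebra.lift_of, ZMod.powMonoidHom_ofAdd_one]
  rw [← AdjoinRoot.mk_eq_zero, ← AdjoinRoot.aeval_eq, ← hψ, aeval_algHom_apply, hf, map_zero]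

omit [NeZero M] in
theorem aeval_cyclicGen_geom_sum {n : ℕ} (hn : n ∣ M) :
    aeval (cyclicGen R M) (∑ i ∈ Finset.range (M / n), (X ^ n) ^ i : R[X]) =
      ∑ i ∈ Finset.Icc 1 (M / n), MonoidAlgebra.of R _ (Multiplicative.ofAdd 1 ^ (i * n)) := by
  simp_rw [map_sum, ← pow_mul, aeval_cyclicGen_X_pow, mul_comm n]
  refine (Finset.sum_Icc_one_eq_sum_range ?_).symm
  rw [Nat.div_mul_cancel hn, ofAdd_one_pow_natCast, ZMod.natCast_self, zero_mul, pow_zero,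
    ofAdd_zero]

end CyclicGroupAlgebra

theorem isLeftRegular_mk_one_sub_cyclicGen_pow {M n n' : ℕ} [NeZero M] (hn : n ∣ M)
    (hn' : n' ∣ n) :
    IsLeftRegular (Ideal.Quotient.mk (Ideal.span {∑ i ∈ Finset.Icc 1 (M / n),
        MonoidAlgebra.of ℤ (Multiplicative (ZMod M)) (Multiplicative.ofAdd 1 ^ (i * n))})
      (1 - MonoidAlgebra.of ℤ _ (Multiplicative.ofAdd 1 ^ n'))) := by
  have hM : M ≠ 0 := NeZero.ne M
  have hn0 : n ≠ 0 := ne_zero_of_dvd_ne_zero hM hn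
  set P : ℤ[X] := ∑ i ∈ Finset.range (M / n), (X ^ n) ^ i
  have hPQ : P * (X ^ n - 1) = X ^ M - 1 := by
    rw [geom_sum_mul, ← pow_mul, Nat.mul_div_cancel' hn]
  have hP : P.Monic :=
    (monic_X_pow n).geom_sum (by simpa using Nat.pos_of_ne_zero hn0)
      ((Nat.div_ne_zero_iff_of_dvd hn).2 ⟨hM, hn0⟩)
  rw [← aeval_cyclicGen_geom_sum ℤ M hn, ← aeval_cyclicGen_X_pow,
    ← map_one (aeval (R := ℤ) (cyclicGen ℤ M)), ← map_sub]
  refine Ideal.Quotient.isLeftRegular_mk_map_of_surjective (aeval_cyclicGen_surjective ℤ M)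
    (fun f hf => ?_) (fun f hf => ?_)
  · exact (dvd_mul_right P _).trans (hPQ ▸ X_pow_sub_one_dvd_of_aeval_cyclicGen_eq_zero hf)
  · refine dvd_of_dvd_mul_of_mul_eq_X_pow_sub_one hM hP hPQ ?_ hf
    obtain ⟨c, hc⟩ := hn'
    rw [← neg_sub, neg_dvd, hc, pow_mul]
    exact sub_one_dvd_pow_sub_one _ c

theorem stmt_5_general (p k n n' : ℕ) (hp : p.Prime) (hn : n ∣ p ^ (k - 1)) (hn' : n' ∣ n) :
    letI G := Multiplicative (ZMod (p ^ k))
    letI σ : G := Multiplicative.ofAdd 1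
    letI N : MonoidAlgebra ℤ G :=
      ∑ i ∈ Finset.Icc 1 (p ^ k / n), MonoidAlgebra.of ℤ G (σ ^ (i * n))
    ∀ r : MonoidAlgebra ℤ G ⧸ Ideal.span {N},
      (Ideal.Quotient.mk (Ideal.span {N}) (1 - MonoidAlgebra.of ℤ G (σ ^ n'))) * r = 0 →
        r = 0 := by
  have : NeZero (p ^ k) := ⟨pow_ne_zero k hp.ne_zero⟩
  have hnM : n ∣ p ^ k := hn.trans (pow_dvd_pow p (k.sub_le 1))
  exact fun r => (isLeftRegular_mk_one_sub_cyclicGen_pow hnM hn').mul_left_eq_zero_iff.mp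

/-- In `R = ℤ[G]/(N_n)` for `G` cyclic of order `p^k` generated by `σ`, with `n` a
`p`-power dividing `p^(k-1)` and `n'` a `p`-power dividing `n`, the image of `1 - σ^{n'}`
is a nonzerodivisor. -/
theorem stmt_5 (p k n n' a b : ℕ) (hp : p.Prime) (hk : 1 ≤ k)
    (hna : n = p ^ a) (hn : n ∣ p ^ (k - 1)) (hnb : n' = p ^ b) (hn' : n' ∣ n) :
    letI G := Multiplicative (ZMod (p ^ k))
    letI σ : G := Multiplicative.ofAdd 1
    letI N : MonoidAlgebra ℤ G :=
      ∑ i ∈ Finset.Icc 1 (p ^ k / n), MonoidAlgebra.of ℤ G (σ ^ (i * n))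
    ∀ r : MonoidAlgebra ℤ G ⧸ Ideal.span {N},
      (Ideal.Quotient.mk (Ideal.span {N}) (1 - MonoidAlgebra.of ℤ G (σ ^ n'))) * r = 0 →
        r = 0 :=
  stmt_5_general p k n n' hp hn hn'
end
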